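/- arXiv:1312.1126 — 2 statements merged into one kernel-verified Lean document; each statement's English description precedes it below -/
import Mathlib

section
/- In the setting of the intertwined Markov chains (finite sets S_1,…,S_n, stochastic matrices P_k, stochastic links Λᵏ_{k−1} with P_k Λᵏ_{k−1} = Λᵏ_{k−1} P_{k−1} = Δᵏ_{k−1}, and sequential-update kernel P^n_Λ), the kernel P^n_Λ is stochastic on the set of allowed configurations: for every X = (x^1,…,x^n) with Λᵏ_{k−1}(x^k, x^{k−1}) > 0 for all 2 ≤ k ≤ n, one has ∑_Y P^n_Λ(X, Y) = 1. -/
/-!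
Sum out the top level `y^n` first. The last factor contributes
`∑_b P_n(x^n, b) Λ(b, y^{n-1}) / Δ(x^n, y^{n-1}) = 1` whenever `Δ(x^n, y^{n-1}) > 0`.
When instead `Δ(x^n, y^{n-1}) = 0`, the intertwining `Δ = Λ P_{n-1}` together with
`Λ(x^n, x^{n-1}) > 0` forces `P_{n-1}(x^{n-1}, y^{n-1}) = 0`, so the remaining product
vanishes anyway. What is left is the kernel of the truncated configuration, and the
induction ends at `∑_y P_0(x^0, y) = 1`.
-/

open Classical

/-- `Δᵏ⁺¹_k = P_{k+1} Λᵏ⁺¹_k`, the intertwined kernel from level `k+1` to level `k`. -/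
noncomputable def DDk (S : ℕ → Type) [∀ k, Fintype (S k)]
    (P : ∀ k, S k → S k → ℝ) (Λ : ∀ k, S (k + 1) → S k → ℝ)
    (k : ℕ) (x : S (k + 1)) (y : S k) : ℝ :=
  ∑ z : S (k + 1), P (k + 1) x z * Λ k z y

/-- Configurations on levels `0, 1, …, n`. -/
abbrev Cfg (S : ℕ → Type) (n : ℕ) := ∀ k : Fin (n + 1), S k

/-- The sequential-update transition kernel `P^n_Λ` on configurations. -/
noncomputable def seqPL (S : ℕ → Type) [∀ k, Fintype (S k)]
    (P : ∀ k, S k → S k → ℝ) (Λ : ∀ k, S (k + 1) → S k → ℝ)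
    (n : ℕ) (X Y : Cfg S n) : ℝ :=
  if ∀ k : Fin n, 0 < DDk S P Λ k (X k.succ) (Y k.castSucc) then
    P 0 (X 0) (Y 0) *
      ∏ k : Fin n,
        (P ((k : ℕ) + 1) (X k.succ) (Y k.succ) * Λ k (Y k.succ) (Y k.castSucc)
          / DDk S P Λ k (X k.succ) (Y k.castSucc))
  else 0

theorem Fin.sum_univ_pi_snoc {M : Type*} [AddCommMonoid M] {n : ℕ} {α : Fin (n + 1) → Type*}
    [∀ i, Fintype (α i)] (f : (∀ i, α i) → M) :
    ∑ x, f x =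
      ∑ x : ∀ i : Fin n, α i.castSucc, ∑ b : α (Fin.last n), f (Fin.snoc x b) := by
  rw [← (Fin.snocEquiv α).sum_comp, Fintype.sum_prod_type_right]
  rfl

section SeqUpdate

variable (S : ℕ → Type) [∀ k, Fintype (S k)] (P : ∀ k, S k → S k → ℝ)
  (Λ : ∀ k, S (k + 1) → S k → ℝ)

/-- The product formula for `seqPL` without its positivity guard: where some `Δ` vanishes,
the factor `… / 0 = 0` already kills the product, so the two agree as soon as `Δ ≥ 0`. -/
noncomputable def seqProd (n : ℕ) (X Y : Cfg S n) : ℝ :=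
  P 0 (X 0) (Y 0) *
    ∏ k : Fin n,
      (P ((k : ℕ) + 1) (X k.succ) (Y k.succ) * Λ k (Y k.succ) (Y k.castSucc)
        / DDk S P Λ k (X k.succ) (Y k.castSucc))

variable {S P Λ}

theorem DDk_nonneg {k : ℕ} (hP : ∀ x y, 0 ≤ P (k + 1) x y) (hΛ : ∀ x y, 0 ≤ Λ k x y)
    (x : S (k + 1)) (y : S k) : 0 ≤ DDk S P Λ k x y :=
  Finset.sum_nonneg fun z _ => mul_nonneg (hP x z) (hΛ z y)

theorem seqPL_eq_seqProd {n : ℕ} (hD : ∀ k : Fin n, ∀ x y, 0 ≤ DDk S P Λ k x y)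
    (X Y : Cfg S n) : seqPL S P Λ n X Y = seqProd S P Λ n X Y := by
  rw [seqPL, seqProd, ite_eq_left_iff]
  intro hnotpos
  obtain ⟨k, hk⟩ := not_forall.mp hnotpos
  have hzero : DDk S P Λ k (X k.succ) (Y k.castSucc) = 0 :=
    le_antisymm (not_lt.mp hk) (hD k _ _)
  rw [Finset.prod_eq_zero (Finset.mem_univ k) (by rw [hzero, div_zero]), mul_zero]

theorem DDk_pos_of_intertwining {k : ℕ} (hPk : ∀ x y, 0 ≤ P k x y)
    (hΛ : ∀ x y, 0 ≤ Λ k x y)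
    (hint : ∀ (x : S (k + 1)) (z : S k),
      ∑ y : S (k + 1), P (k + 1) x y * Λ k y z = ∑ w : S k, Λ k x w * P k w z)
    {x' : S (k + 1)} {x a : S k} (hΛx : 0 < Λ k x' x) (hPx : P k x a ≠ 0) :
    0 < DDk S P Λ k x' a :=
  calc 0 < Λ k x' x * P k x a := mul_pos hΛx ((hPk x a).lt_of_ne' hPx)
    _ ≤ ∑ w : S k, Λ k x' w * P k w a :=
      Finset.single_le_sum (fun w _ => mul_nonneg (hΛ x' w) (hPk w a)) (Finset.mem_univ x)
    _ = DDk S P Λ k x' a := (hint x' a).symm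

theorem sum_div_DDk_self {k : ℕ} {x : S (k + 1)} {a : S k} (h : DDk S P Λ k x a ≠ 0) :
    ∑ b, P (k + 1) x b * Λ k b a / DDk S P Λ k x a = 1 := by
  rw [← Finset.sum_div]
  exact div_self h

theorem seqProd_eq_zero_of_last {n : ℕ} {X Y : Cfg S n}
    (h : P n (X (Fin.last n)) (Y (Fin.last n)) = 0) : seqProd S P Λ n X Y = 0 := by
  cases n with
  | zero => exact mul_eq_zero_of_left h _
  | succ m =>
    refine mul_eq_zero_of_right _ (Finset.prod_eq_zero (Finset.mem_univ (Fin.last m)) ?_)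
    exact mul_eq_zero_of_left (mul_eq_zero_of_left h _) _

theorem seqProd_snoc {n : ℕ} (X : Cfg S (n + 1)) (Y : Cfg S n) (b : S (n + 1)) :
    seqProd S P Λ (n + 1) X (Fin.snoc (α := fun k : Fin (n + 2) => S k) Y b) =
      seqProd S P Λ n (Fin.init X) Y *
        (P (n + 1) (X (Fin.last (n + 1))) b * Λ n b (Y (Fin.last n))
          / DDk S P Λ n (X (Fin.last (n + 1))) (Y (Fin.last n))) := by
  have hY0 : Fin.snoc (α := fun k : Fin (n + 2) => S k) Y b 0 = Y 0 :=
    Fin.snoc_castSucc (i := 0) ..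
  simp only [seqProd, Fin.prod_univ_castSucc, Fin.succ_castSucc, Fin.snoc_castSucc, Fin.succ_last,
    Fin.snoc_last, hY0, mul_assoc]
  rfl

theorem sum_seqProd_snoc {n : ℕ} (hPn : ∀ x y, 0 ≤ P n x y) (hΛ : ∀ x y, 0 ≤ Λ n x y)
    (hint : ∀ (x : S (n + 1)) (z : S n),
      ∑ y : S (n + 1), P (n + 1) x y * Λ n y z = ∑ w : S n, Λ n x w * P n w z)
    (X : Cfg S (n + 1)) (hX : 0 < Λ n (X (Fin.last (n + 1))) (X (Fin.last n).castSucc))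
    (Y : Cfg S n) :
    ∑ b : S (n + 1),
        seqProd S P Λ (n + 1) X (Fin.snoc (α := fun k : Fin (n + 2) => S k) Y b) =
      seqProd S P Λ n (Fin.init X) Y := by
  simp only [seqProd_snoc, ← Finset.mul_sum]
  by_cases hP : P n (Fin.init X (Fin.last n)) (Y (Fin.last n)) = 0
  · rw [seqProd_eq_zero_of_last hP, zero_mul]
  · rw [sum_div_DDk_self (DDk_pos_of_intertwining hPn hΛ hint hX hP).ne', mul_one]

theorem sum_seqProd_eq_one {n : ℕ} (hPpos : ∀ k ≤ n, ∀ x y, 0 ≤ P k x y)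
    (hPsum : ∀ x, ∑ y, P 0 x y = 1) (hΛpos : ∀ k < n, ∀ x y, 0 ≤ Λ k x y)
    (hint : ∀ k < n, ∀ (x : S (k + 1)) (z : S k),
      ∑ y : S (k + 1), P (k + 1) x y * Λ k y z = ∑ w : S k, Λ k x w * P k w z)
    (X : Cfg S n) (hX : ∀ k : Fin n, 0 < Λ k (X k.succ) (X k.castSucc)) :
    ∑ Y, seqProd S P Λ n X Y = 1 := by
  induction n with
  | zero =>
    rw [← hPsum (X 0)]
    exact Fintype.sum_equiv (Equiv.piUnique fun k : Fin 1 => S k) _ _ fun Y => by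
      simp only [seqProd, Finset.univ_eq_empty, Finset.prod_empty, mul_one]
      rfl
  | succ n ih =>
    calc ∑ Y, seqProd S P Λ (n + 1) X Y
        = ∑ Y : Cfg S n, ∑ b : S (n + 1),
            seqProd S P Λ (n + 1) X (Fin.snoc (α := fun k : Fin (n + 2) => S k) Y b) :=
          Fin.sum_univ_pi_snoc _
      _ = ∑ Y : Cfg S n, seqProd S P Λ n (Fin.init X) Y :=
          Finset.sum_congr rfl fun Y _ => sum_seqProd_snoc (hPpos n n.le_succ)
            (hΛpos n n.lt_succ_self) (hint n n.lt_succ_self) X (hX (Fin.last n)) Y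
      _ = 1 :=
          ih (fun k hk => hPpos k (hk.trans n.le_succ))
            (fun k hk => hΛpos k (hk.trans n.lt_succ_self))
            (fun k hk => hint k (hk.trans n.lt_succ_self)) (Fin.init X) (fun k => hX k.castSucc)

end SeqUpdate

theorem seqPL_stochastic_general (S : ℕ → Type) [∀ k, Fintype (S k)]
    (P : ∀ k, S k → S k → ℝ) (Λ : ∀ k, S (k + 1) → S k → ℝ) (n : ℕ)
    (hPpos : ∀ k ≤ n, ∀ x y, 0 ≤ P k x y)
    (hPsum : ∀ k ≤ n, ∀ x, ∑ y, P k x y = 1)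
    (hΛpos : ∀ k < n, ∀ x y, 0 ≤ Λ k x y)
    (hint : ∀ k < n, ∀ (x : S (k + 1)) (z : S k),
      ∑ y : S (k + 1), P (k + 1) x y * Λ k y z = ∑ w : S k, Λ k x w * P k w z)
    (X : Cfg S n) (hX : ∀ k : Fin n, 0 < Λ k (X k.succ) (X k.castSucc)) :
    ∑ Y : Cfg S n, seqPL S P Λ n X Y = 1 := by
  have hD : ∀ k : Fin n, ∀ x y, 0 ≤ DDk S P Λ k x y := fun k =>
    DDk_nonneg (hPpos _ k.isLt) (hΛpos _ k.isLt)
  rw [Finset.sum_congr rfl fun Y _ => seqPL_eq_seqProd hD X Y]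
  exact sum_seqProd_eq_one hPpos (hPsum 0 n.zero_le) hΛpos hint X hX

/-- The sequential-update kernel `P^n_Λ` is stochastic on the set of allowed configurations:
for every configuration `X` with `Λ(x^{k+1}, x^k) > 0` for all `k`, `∑_Y P^n_Λ(X,Y) = 1`. -/
theorem seqPL_stochastic (S : ℕ → Type) [∀ k, Fintype (S k)] [∀ k, Nonempty (S k)]
    (P : ∀ k, S k → S k → ℝ) (Λ : ∀ k, S (k + 1) → S k → ℝ) (n : ℕ)
    (hPpos : ∀ k ≤ n, ∀ x y, 0 ≤ P k x y)
    (hPsum : ∀ k ≤ n, ∀ x, ∑ y, P k x y = 1)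
    (hΛpos : ∀ k < n, ∀ x y, 0 ≤ Λ k x y)
    (hΛsum : ∀ k < n, ∀ x, ∑ y, Λ k x y = 1)
    (hint : ∀ k < n, ∀ (x : S (k + 1)) (z : S k),
      ∑ y : S (k + 1), P (k + 1) x y * Λ k y z = ∑ w : S k, Λ k x w * P k w z)
    (X : Cfg S n) (hX : ∀ k : Fin n, 0 < Λ k (X k.succ) (X k.castSucc)) :
    ∑ Y : Cfg S n, seqPL S P Λ n X Y = 1 :=
  seqPL_stochastic_general S P Λ n hPpos hPsum hΛpos hint X hX
end

section
/- (Borodin–Rains theorem on conditional L-ensembles, finite algebraic form.) Let 𝔛 be a finite set, 𝔜 ⊆ 𝔛 a nonempty subset, and L an 𝔛 × 𝔛 matrix over ℝ (or ℂ). Let 1_𝔜 be the diagonal 𝔛 × 𝔛 matrix with entry 1 at x ∈ 𝔜 and 0 at x ∈ 𝔜^c = 𝔛 \ 𝔜, and assume 1_𝔜 + L is invertible. Set K = (1_𝔜 − (1_𝔜 + L)^{−1}) restricted to 𝔜 × 𝔜. Then for every subset S ⊆ 𝔜: ∑_{Y : S ⊆ Y ⊆ 𝔜} det(L_{Y ∪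 𝔜^c}) = det(1_𝔜 + L) · det(K_S). In particular, if all det(L_{Y ∪ 𝔜^c}) ≥ 0, the conditional L-ensemble P(Y) = det(L_{Y∪𝔜^c})/det(1_𝔜 + L) on subsets Y of 𝔜 is a determinantal point process with correlation kernel K. -/
/-!
Expanding the determinant multilinearly in the rows gives the principal-minor expansion
`det (diagonal d + M) = ∑ V, (∏ x ∉ V, d x) * det M_V`. With `d` the indicator of `𝔜 \ S`, the
sum on the left is therefore `det (1_{𝔜 \ S} + L) = det (B - 1_S)` with `B = 1_𝔜 + L`.
Factoring `B - 1_S = (1 - 1_S B⁻¹) B`, the first factor has identity rows outside `S`, so its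
determinant is the principal minor `det (1 - B⁻¹)_S`, which is `det K_S` because `S ⊆ 𝔜`.
-/

namespace Matrix

variable {n R : Type*} [Fintype n] [DecidableEq n] [CommRing R]

theorem det_add_diagonal (M : Matrix n n R) (d : n → R) :
    (M + diagonal d).det =
      ∑ s : Finset n, (∏ i ∈ sᶜ, d i) * (M.submatrix (↑) (↑) : Matrix s s R).det := by
  have hrows (s : Finset n) : s.piecewise M.row (diagonal d).row =
      fun i => (if i ∈ s then 1 else d i) • s.piecewise M.row (1 : Matrix n n R).row i := by
    funext i j
    by_cases hi : i ∈ s <;> simp [hi, row, Finset.piecewise, diagonal_apply, one_apply]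
  calc (M + diagonal d).det
      = ∑ s : Finset n, detRowAlternating (s.piecewise M.row (diagonal d).row) :=
        detRowAlternating.map_add_univ M.row (diagonal d).row
    _ = _ := by
      refine Finset.sum_congr rfl fun s _ => ?_
      rw [hrows, AlternatingMap.map_smul_univ, smul_eq_mul, ← det_piecewise_one_eq_submatrix_det]
      congr 1
      rw [Finset.prod_ite, Finset.prod_const_one, one_mul]
      congr 1; ext; simp

theorem det_diagonal_indicator_add (T : Finset n) (M : Matrix n n R) :
    (diagonal (fun x => if x ∈ T then 1 else 0) + M).det =
      ∑ V ∈ Finset.univ.filter (fun V => Tᶜ ⊆ V), (M.submatrix (↑) (↑) : Matrix V V R).det := by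
  rw [add_comm, det_add_diagonal, Finset.sum_filter]
  refine Finset.sum_congr rfl fun V _ => ?_
  rw [Finset.prod_boole]
  simp only [← Finset.subset_iff, boole_mul]
  exact if_congr compl_le_iff_compl_le rfl rfl

theorem det_sub_diagonal_indicator {B : Matrix n n R} (hB : IsUnit B) (S : Finset n) :
    (B - diagonal (fun x => if x ∈ S then 1 else 0)).det =
      B.det * ((1 - B⁻¹).submatrix (↑) (↑) : Matrix S S R).det := by
  have hfactor : B - diagonal (fun x => if x ∈ S then 1 else 0) =
      of (S.piecewise (1 - B⁻¹).row (1 : Matrix n n R).row) * B := by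
    have hpiece : of (S.piecewise (1 - B⁻¹).row (1 : Matrix n n R).row) =
        1 - diagonal (fun x => if x ∈ S then 1 else 0) * B⁻¹ := by
      ext i j
      by_cases hi : i ∈ S <;> simp [hi, Finset.piecewise, row, diagonal_mul]
    rw [hpiece, sub_mul, one_mul, Matrix.mul_assoc,
      nonsing_inv_mul _ ((isUnit_iff_isUnit_det B).mp hB), Matrix.mul_one]
  rw [hfactor, det_mul, det_piecewise_one_eq_submatrix_det, mul_comm]

end Matrix

theorem Finset.sum_filter_subset_union_compl {α M : Type*} [Fintype α] [DecidableEq α]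
    [AddCommMonoid M] (f : Finset α → M) {S Y : Finset α} (hS : S ⊆ Y) :
    ∑ Z ∈ univ.filter (fun Z => S ⊆ Z ∧ Z ⊆ Y), f (Z ∪ (univ \ Y)) =
      ∑ V ∈ univ.filter (fun V => (Y \ S)ᶜ ⊆ V), f V := by
  refine sum_nbij' (· ∪ (univ \ Y)) (· ∩ Y) ?_ ?_ ?_ ?_ (fun _ _ => rfl) <;> intro Z hZ <;>
    simp only [mem_filter, mem_univ, true_and] at hZ ⊢ <;>
    grind [mem_compl]

theorem borodin_rains_conditional_L_ensemble_general (α : Type) [Fintype α] [DecidableEq α]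
    (𝔜 : Finset α) (L : Matrix α α ℝ)
    (hinv : IsUnit (Matrix.diagonal (fun x => if x ∈ 𝔜 then (1 : ℝ) else 0) + L))
    (S : Finset α) (hS : S ⊆ 𝔜) :
    ∑ Y ∈ Finset.univ.filter (fun Y : Finset α => S ⊆ Y ∧ Y ⊆ 𝔜),
        (L.submatrix (fun i : (Y ∪ (Finset.univ \ 𝔜) : Finset α) => (i : α))
          (fun j : (Y ∪ (Finset.univ \ 𝔜) : Finset α) => (j : α))).det
      = (Matrix.diagonal (fun x => if x ∈ 𝔜 then (1 : ℝ) else 0) + L).det *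
        ((Matrix.diagonal (fun x => if x ∈ 𝔜 then (1 : ℝ) else 0)
            - (Matrix.diagonal (fun x => if x ∈ 𝔜 then (1 : ℝ) else 0) + L)⁻¹).submatrix
          (fun i : S => (i : α)) (fun j : S => (j : α))).det := by
  set B := Matrix.diagonal (fun x => if x ∈ 𝔜 then (1 : ℝ) else 0) + L
  have hdiag : Matrix.diagonal (fun x => if x ∈ 𝔜 \ S then (1 : ℝ) else 0) + L =
      B - Matrix.diagonal (fun x => if x ∈ S then 1 else 0) := by
    rw [add_sub_right_comm, Matrix.diagonal_sub]
    congr 2 with x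
    by_cases hx : x ∈ S
    · simp [hx, hS hx]
    · simp [hx]
  have hK : ((Matrix.diagonal (fun x => if x ∈ 𝔜 then (1 : ℝ) else 0) - B⁻¹).submatrix
      (fun i : S => (i : α)) (fun j : S => (j : α))) = (1 - B⁻¹).submatrix (↑) (↑) := by
    ext i j
    simp [Matrix.one_apply, Matrix.diagonal_apply, hS i.2]
  rw [Finset.sum_filter_subset_union_compl (fun V => (L.submatrix (↑) (↑) : Matrix V V ℝ).det) hS,
    ← Matrix.det_diagonal_indicator_add, hdiag, Matrix.det_sub_diagonal_indicator hinv, hK]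

/-- Borodin–Rains theorem on conditional `L`-ensembles (finite algebraic form): with `𝔜 ⊆ 𝔛`
nonempty, `1_𝔜` the diagonal indicator matrix of `𝔜`, `1_𝔜 + L` invertible and
`K = (1_𝔜 - (1_𝔜 + L)⁻¹)|_{𝔜×𝔜}`, for every `S ⊆ 𝔜`:
`∑_{S ⊆ Y ⊆ 𝔜} det(L_{Y ∪ 𝔜ᶜ}) = det(1_𝔜 + L) · det(K_S)`. In particular the conditional
`L`-ensemble `P(Y) = det(L_{Y∪𝔜ᶜ})/det(1_𝔜 + L)` is determinantal with kernel `K`. -/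
theorem borodin_rains_conditional_L_ensemble (α : Type) [Fintype α] [DecidableEq α]
    (𝔜 : Finset α) (h𝔜 : 𝔜.Nonempty) (L : Matrix α α ℝ)
    (hinv : IsUnit (Matrix.diagonal (fun x => if x ∈ 𝔜 then (1 : ℝ) else 0) + L))
    (S : Finset α) (hS : S ⊆ 𝔜) :
    ∑ Y ∈ Finset.univ.filter (fun Y : Finset α => S ⊆ Y ∧ Y ⊆ 𝔜),
        (L.submatrix (fun i : (Y ∪ (Finset.univ \ 𝔜) : Finset α) => (i : α))
          (fun j : (Y ∪ (Finset.univ \ 𝔜) : Finset α) => (j : α))).det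
      = (Matrix.diagonal (fun x => if x ∈ 𝔜 then (1 : ℝ) else 0) + L).det *
        ((Matrix.diagonal (fun x => if x ∈ 𝔜 then (1 : ℝ) else 0)
            - (Matrix.diagonal (fun x => if x ∈ 𝔜 then (1 : ℝ) else 0) + L)⁻¹).submatrix
          (fun i : S => (i : α)) (fun j : S => (j : α))).det :=
  borodin_rains_conditional_L_ensemble_general α 𝔜 L hinv S hS
end
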